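/- Let ρ = (1/2)(I + r₁σ₁ + r₂σ₂ + r₃σ₃) be a single-qubit density matrix with Bloch vector r = (r₁, r₂, r₃), |r| ≤ 1. Then the modified trace distance coherence and the trace-norm mixedness satisfy the trade-off C'_tr(ρ) + M_tr(ρ) = √(r₁² + r₂²) + (1 − |r|) ≤ 1, with equality if and only if r₃ = 0. -/

import Mathlib

open Matrix
open scoped ComplexOrder

/-- The trace norm of a matrix `A`: `‖A‖_tr = Tr √(AᴴA)`. -/
noncomputable def traceNorm {d : ℕ} (A : Matrix (Fin d) (Fin d) ℂ) : ℝ :=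
  (((Matrix.posSemidef_conjTranspose_mul_self A).1.eigenvectorUnitary.1 *
    diagonal ((fun x : ℝ => (x : ℂ)) ∘ Real.sqrt ∘ (Matrix.posSemidef_conjTranspose_mul_self A).1.eigenvalues) *
    (star (Matrix.posSemidef_conjTranspose_mul_self A).1.eigenvectorUnitary :
      Matrix (Fin d) (Fin d) ℂ)).trace).re


/-- The Pauli matrices. -/
noncomputable def σ1 : Matrix (Fin 2) (Fin 2) ℂ := !![0, 1; 1, 0]
noncomputable def σ2 : Matrix (Fin 2) (Fin 2) ℂ := !![0, -Complex.I; Complex.I, 0]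
noncomputable def σ3 : Matrix (Fin 2) (Fin 2) ℂ := !![1, 0; 0, -1]

/-!
The singular values `s₁, s₂` of a `2 × 2` matrix `A` satisfy `s₁² + s₂² = ∑ |Aᵢⱼ|²` and
`s₁ s₂ = |det A|`, so `‖A‖_tr = √(∑ |Aᵢⱼ|² + 2 |det A|)`. Since
`|det A| ≥ |A₀₁| |A₁₀| - |A₀₀| |A₁₁|`, this gives `‖A‖_tr ≥ |A₀₁| + |A₁₀|`. Subtracting `l δ` with
`δ` diagonal leaves the off-diagonal entries of `ρ` unchanged, and subtracting the diagonal of `ρ`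
itself attains the bound, so `C'_tr(ρ) = |ρ₀₁| + |ρ₁₀| = √(r₁² + r₂²)`. On the other hand
`ρ - I/2 = (r · σ)/2` and `r · σ` has eigenvalues `±|r|`, so `M_tr(ρ) = 1 - |r|`; the trade-off
is then `√(r₁² + r₂²) ≤ |r|`.
-/

lemma traceNorm_eq_sum_sqrt_eigenvalues {d : ℕ} (A : Matrix (Fin d) (Fin d) ℂ) :
    traceNorm A = ∑ i, √((posSemidef_conjTranspose_mul_self A).1.eigenvalues i) := by
  rw [traceNorm, trace_mul_comm, ← Matrix.mul_assoc, Unitary.coe_star_mul_self, Matrix.one_mul,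
    trace_diagonal]
  simp

lemma trace_conjTranspose_mul_self_fin_two (A : Matrix (Fin 2) (Fin 2) ℂ) :
    (Aᴴ * A).trace = ((‖A 0 0‖ ^ 2 + ‖A 0 1‖ ^ 2 + ‖A 1 0‖ ^ 2 + ‖A 1 1‖ ^ 2 : ℝ) : ℂ) := by
  simp only [trace_fin_two, mul_apply, Fin.sum_univ_two, conjTranspose_apply, Complex.star_def,
    Complex.conj_mul']
  push_cast
  ring

lemma traceNorm_fin_two (A : Matrix (Fin 2) (Fin 2) ℂ) :
    traceNorm A =
      √(‖A 0 0‖ ^ 2 + ‖A 0 1‖ ^ 2 + ‖A 1 0‖ ^ 2 + ‖A 1 1‖ ^ 2 + 2 * ‖A.det‖) := by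
  have hA := posSemidef_conjTranspose_mul_self A
  set μ := hA.1.eigenvalues
  have hμ₀ : 0 ≤ μ 0 := hA.eigenvalues_nonneg 0
  have hμ₁ : 0 ≤ μ 1 := hA.eigenvalues_nonneg 1
  have hsum : μ 0 + μ 1 = ‖A 0 0‖ ^ 2 + ‖A 0 1‖ ^ 2 + ‖A 1 0‖ ^ 2 + ‖A 1 1‖ ^ 2 := by
    have := hA.1.trace_eq_sum_eigenvalues
    rw [trace_conjTranspose_mul_self_fin_two, Fin.sum_univ_two] at this
    exact RCLike.ofReal_injective (K := ℂ) (by rw [RCLike.ofReal_add]; exact this.symm)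
  have hprod : μ 0 * μ 1 = ‖A.det‖ ^ 2 := by
    have hdet : (Aᴴ * A).det = ((‖A.det‖ ^ 2 : ℝ) : ℂ) := by
      rw [det_mul, det_conjTranspose, Complex.star_def, Complex.conj_mul', Complex.ofReal_pow]
    have := hA.1.det_eq_prod_eigenvalues
    rw [hdet, Fin.prod_univ_two] at this
    exact RCLike.ofReal_injective (K := ℂ) (by rw [RCLike.ofReal_mul]; exact this.symm)
  rw [traceNorm_eq_sum_sqrt_eigenvalues, Fin.sum_univ_two, ← hsum, ← Real.sqrt_sq (norm_nonneg _),
    ← hprod, Real.sqrt_mul hμ₀,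
    ← Real.sqrt_sq (add_nonneg (Real.sqrt_nonneg _) (Real.sqrt_nonneg _))]
  congr 1
  rw [add_sq, Real.sq_sqrt hμ₀, Real.sq_sqrt hμ₁]
  ring

lemma norm_add_norm_le_traceNorm (A : Matrix (Fin 2) (Fin 2) ℂ) :
    ‖A 0 1‖ + ‖A 1 0‖ ≤ traceNorm A := by
  have hdet : ‖A 0 1‖ * ‖A 1 0‖ - ‖A 0 0‖ * ‖A 1 1‖ ≤ ‖A.det‖ := by
    rw [det_fin_two, norm_sub_rev, ← norm_mul, ← norm_mul]
    exact norm_sub_norm_le _ _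
  rw [traceNorm_fin_two]
  apply Real.le_sqrt_of_sq_le
  nlinarith [sq_nonneg (‖A 0 0‖ - ‖A 1 1‖)]

lemma traceNorm_of_diag_eq_zero {A : Matrix (Fin 2) (Fin 2) ℂ} (h₀ : A 0 0 = 0)
    (h₁ : A 1 1 = 0) :
    traceNorm A = ‖A 0 1‖ + ‖A 1 0‖ := by
  rw [traceNorm_fin_two, det_fin_two, h₀, h₁,
    ← Real.sqrt_sq (by positivity : 0 ≤ ‖A 0 1‖ + ‖A 1 0‖)]
  congr 1
  simp only [norm_zero, mul_zero, zero_sub, norm_neg, norm_mul]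
  ring

lemma traceNorm_real_smul_fin_two (c : ℝ) (A : Matrix (Fin 2) (Fin 2) ℂ) :
    traceNorm (c • A) = |c| * traceNorm A := by
  have hdet : (c • A).det = (c : ℂ) ^ 2 * A.det := by
    rw [← Complex.coe_smul, det_smul, Fintype.card_fin]
  rw [traceNorm_fin_two, traceNorm_fin_two, hdet, ← Real.sqrt_sq_eq_abs,
    ← Real.sqrt_mul (sq_nonneg c)]
  congr 1
  simp only [Matrix.smul_apply, norm_smul, norm_mul, norm_pow, Complex.norm_real, Real.norm_eq_abs,
    mul_pow, sq_abs]
  ring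

lemma pauli_eq (r₁ r₂ r₃ : ℝ) :
    r₁ • σ1 + r₂ • σ2 + r₃ • σ3 = !![(r₃ : ℂ), r₁ - r₂ * Complex.I; r₁ + r₂ * Complex.I, -r₃] := by
  ext i j
  fin_cases i <;> fin_cases j <;> simp [σ1, σ2, σ3, sub_eq_add_neg]

lemma traceNorm_pauli (r₁ r₂ r₃ : ℝ) :
    traceNorm (r₁ • σ1 + r₂ • σ2 + r₃ • σ3) = 2 * √(r₁ ^ 2 + r₂ ^ 2 + r₃ ^ 2) := by
  have hdet : ‖(r₁ • σ1 + r₂ • σ2 + r₃ • σ3).det‖ = r₁ ^ 2 + r₂ ^ 2 + r₃ ^ 2 := by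
    rw [pauli_eq, det_fin_two_of,
      ← Real.norm_of_nonneg (by positivity : 0 ≤ r₁ ^ 2 + r₂ ^ 2 + r₃ ^ 2), ← Complex.norm_real,
      ← norm_neg]
    push_cast
    congr 1
    linear_combination -(r₂ : ℂ) ^ 2 * Complex.I_sq
  have hentries : ‖(r₁ • σ1 + r₂ • σ2 + r₃ • σ3) 0 0‖ ^ 2 + ‖(r₁ • σ1 + r₂ • σ2 + r₃ • σ3) 0 1‖ ^ 2
      + ‖(r₁ • σ1 + r₂ • σ2 + r₃ • σ3) 1 0‖ ^ 2 + ‖(r₁ • σ1 + r₂ • σ2 + r₃ • σ3) 1 1‖ ^ 2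
      = 2 * (r₁ ^ 2 + r₂ ^ 2 + r₃ ^ 2) := by
    rw [pauli_eq]
    simp [Complex.sq_norm, Complex.normSq_apply]
    ring
  rw [traceNorm_fin_two, hentries, hdet, ← two_mul, ← mul_assoc,
    show (2 : ℝ) * 2 = 2 ^ 2 by norm_num, Real.sqrt_mul' _ (by positivity),
    Real.sqrt_sq zero_le_two, mul_comm]

noncomputable def modTraceCoherence {d : ℕ} (ρ : Matrix (Fin d) (Fin d) ℂ) : ℝ :=
  sInf {x : ℝ | ∃ (l : ℝ) (δ : Matrix (Fin d) (Fin d) ℂ),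
    0 ≤ l ∧ δ.PosSemidef ∧ δ.trace = 1 ∧ δ.IsDiag ∧ x = traceNorm (ρ - l • δ)}

lemma modTraceCoherence_fin_two (ρ : Matrix (Fin 2) (Fin 2) ℂ) (hdiag : ∀ i, 0 ≤ ρ i i)
    (htrace : ρ.trace = 1) : modTraceCoherence ρ = ‖ρ 0 1‖ + ‖ρ 1 0‖ := by
  refine IsLeast.csInf_eq ⟨⟨1, diagonal ρ.diag, zero_le_one, PosSemidef.diagonal hdiag,
    by rwa [trace_diagonal], isDiag_diagonal _, ?_⟩, ?_⟩
  · rw [one_smul, traceNorm_of_diag_eq_zero] <;> simp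
  · rintro _ ⟨l, δ, -, -, -, hδ, rfl⟩
    have h₀₁ : δ 0 1 = 0 := hδ zero_ne_one
    have h₁₀ : δ 1 0 = 0 := hδ one_ne_zero
    simpa [h₀₁, h₁₀] using norm_add_norm_le_traceNorm (ρ - l • δ)

noncomputable def blochState (r₁ r₂ r₃ : ℝ) : Matrix (Fin 2) (Fin 2) ℂ :=
  ((1 : ℝ) / 2) • (1 + r₁ • σ1 + r₂ • σ2 + r₃ • σ3)

lemma blochState_eq (r₁ r₂ r₃ : ℝ) : blochState r₁ r₂ r₃ =
    !![(((1 + r₃) / 2 : ℝ) : ℂ), (r₁ - r₂ * Complex.I) / 2;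
      (r₁ + r₂ * Complex.I) / 2, (((1 - r₃) / 2 : ℝ) : ℂ)] := by
  ext i j
  fin_cases i <;> fin_cases j <;> simp [blochState, σ1, σ2, σ3] <;> ring

lemma blochState_sub_half (r₁ r₂ r₃ : ℝ) :
    blochState r₁ r₂ r₃ - (2⁻¹ : ℝ) • 1 = (2⁻¹ : ℝ) • (r₁ • σ1 + r₂ • σ2 + r₃ • σ3) := by
  rw [blochState]
  module

lemma modTraceCoherence_blochState {r₁ r₂ r₃ : ℝ} (h : |r₃| ≤ 1) :
    modTraceCoherence (blochState r₁ r₂ r₃) = √(r₁ ^ 2 + r₂ ^ 2) := by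
  have hdiag : ∀ i, 0 ≤ blochState r₁ r₂ r₃ i i := by
    obtain ⟨hlo, hhi⟩ := abs_le.mp h
    intro i
    fin_cases i <;> rw [blochState_eq] <;> exact Complex.zero_le_real.mpr (by linarith)
  have htrace : (blochState r₁ r₂ r₃).trace = 1 := by
    rw [blochState_eq, trace_fin_two_of]
    push_cast
    ring
  rw [modTraceCoherence_fin_two _ hdiag htrace, blochState_eq]
  simp [Complex.norm_eq_sqrt_sq_add_sq]

lemma traceNorm_blochState_sub_half (r₁ r₂ r₃ : ℝ) :
    traceNorm (blochState r₁ r₂ r₃ - (2⁻¹ : ℝ) • 1) = √(r₁ ^ 2 + r₂ ^ 2 + r₃ ^ 2) := by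
  rw [blochState_sub_half, traceNorm_real_smul_fin_two, traceNorm_pauli, abs_of_pos (by norm_num)]
  ring

/-- Trade-off between coherence and mixedness for a single-qubit state:
`C'_tr(ρ) + M_tr(ρ) = √(r₁² + r₂²) + (1 − |r|) ≤ 1`, with equality iff `r₃ = 0`. -/
theorem coherence_mixedness_tradeoff_qubit (r₁ r₂ r₃ : ℝ)
    (hr : Real.sqrt (r₁ ^ 2 + r₂ ^ 2 + r₃ ^ 2) ≤ 1)
    (ρ : Matrix (Fin 2) (Fin 2) ℂ)
    (hρ : ρ = ((1 : ℝ) / 2) • (1 + r₁ • σ1 + r₂ • σ2 + r₃ • σ3)) :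
    sInf {x : ℝ | ∃ (l : ℝ) (δ : Matrix (Fin 2) (Fin 2) ℂ),
        0 ≤ l ∧ δ.PosSemidef ∧ δ.trace = 1 ∧ δ.IsDiag ∧
        x = traceNorm (ρ - l • δ)}
      + (1 - traceNorm (ρ - ((2 : ℝ)⁻¹) • 1))
      = Real.sqrt (r₁ ^ 2 + r₂ ^ 2) + (1 - Real.sqrt (r₁ ^ 2 + r₂ ^ 2 + r₃ ^ 2)) ∧
    Real.sqrt (r₁ ^ 2 + r₂ ^ 2) + (1 - Real.sqrt (r₁ ^ 2 + r₂ ^ 2 + r₃ ^ 2)) ≤ 1 ∧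
    (Real.sqrt (r₁ ^ 2 + r₂ ^ 2) + (1 - Real.sqrt (r₁ ^ 2 + r₂ ^ 2 + r₃ ^ 2)) = 1
      ↔ r₃ = 0) := by
  change ρ = blochState r₁ r₂ r₃ at hρ
  have hr₃ : |r₃| ≤ 1 :=
    calc |r₃| = √(r₃ ^ 2) := (Real.sqrt_sq_eq_abs r₃).symm
      _ ≤ √(r₁ ^ 2 + r₂ ^ 2 + r₃ ^ 2) :=
        Real.sqrt_le_sqrt (le_add_of_nonneg_left (by positivity))
      _ ≤ 1 := hr
  have hcoh : modTraceCoherence ρ = √(r₁ ^ 2 + r₂ ^ 2) := by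
    rw [hρ, modTraceCoherence_blochState hr₃]
  have hmix : traceNorm (ρ - (2⁻¹ : ℝ) • 1) = √(r₁ ^ 2 + r₂ ^ 2 + r₃ ^ 2) := by
    rw [hρ, traceNorm_blochState_sub_half]
  have hle : √(r₁ ^ 2 + r₂ ^ 2) ≤ √(r₁ ^ 2 + r₂ ^ 2 + r₃ ^ 2) :=
    Real.sqrt_le_sqrt (le_add_of_nonneg_right (sq_nonneg r₃))
  refine ⟨?_, by linarith, ?_⟩
  · change modTraceCoherence ρ + _ = _
    rw [hcoh, hmix]
  calc _ ↔ √(r₁ ^ 2 + r₂ ^ 2) = √(r₁ ^ 2 + r₂ ^ 2 + r₃ ^ 2) := by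
        constructor <;> intro h <;> linarith
    _ ↔ r₁ ^ 2 + r₂ ^ 2 = r₁ ^ 2 + r₂ ^ 2 + r₃ ^ 2 := Real.sqrt_inj (by positivity) (by positivity)
    _ ↔ r₃ = 0 := by simp
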